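/- Let k be a field of characteristic l, A an augmented k-algebra in which every element has an l-th root, and G ⊆ G' ⊆ Σ_n subgroups of l-power order. Let B = A^{⊗n} with the permutation Σ_n-action and tensor product augmentation, and let I_{B^G}, I_{B^{G'}} be the augmentation ideals of the invariant subrings B^G, B^{G'}. Then I_{B^G} = I_{B^{G'}} · B^G. -/

import Mathlib

open scoped TensorProduct

/-- The subring of invariants of `B` under the action (through `ρ`) of the subgroup `G`. -/
def invariants {k B : Type*} [CommSemiring k] [CommRing B] [Algebra k B] {n : ℕ}
    (ρ : Equiv.Perm (Fin n) →* (B ≃ₐ[k] B)) (G : Subgroup (Equiv.Perm (Fin n))) :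
    Subring B where
  carrier := {b | ∀ g ∈ G, ρ g b = b}
  mul_mem' := fun ha hb g hg => by rw [map_mul, ha g hg, hb g hg]
  one_mem' := fun g _ => map_one (ρ g)
  add_mem' := fun ha hb g hg => by rw [map_add, ha g hg, hb g hg]
  zero_mem' := fun g _ => map_zero (ρ g)
  neg_mem' := fun ha g hg => by rw [map_neg, ha g hg]

lemma invariants_antitone {k B : Type*} [CommSemiring k] [CommRing B] [Algebra k B] {n : ℕ}
    (ρ : Equiv.Perm (Fin n) →* (B ≃ₐ[k] B)) {G G' : Subgroup (Equiv.Perm (Fin n))}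
    (h : G ≤ G') : invariants ρ G' ≤ invariants ρ G :=
  fun _ hb g hg => hb g (h hg)

/-!
Write `q = |G'| = l ^ e`. In the basis of `B` made of tensor products of basis vectors of `A`,
the coordinates of a `G`-invariant tensor are constant on `G`-orbits, so it is a `k`-linear
combination of sums of monomials over `G`-stable sets. Taking `q`-th roots factorwise and using that
Frobenius is additive in characteristic `l`, such a sum is `z ^ q` for the `G`-invariant sum `z` of
the roots. Since `z ^ q - ε(z) ^ q = (z - ε z) ^ q`, it remains to see that
`y ^ q ∈ I_{B^{G'}} · B^G` for `y` in the augmentation ideal of `B^G`: `y` is a root of the monic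
polynomial `∏_{g ∈ G'} (X - g y)`, whose coefficients are `G'`-invariant and, below the leading
one, have augmentation `0`.
-/
open Module PiTensorProduct

theorem Finset.sum_comp_smul_of_forall_smul_mem {G P M : Type*} [Group G] [MulAction G P]
    [AddCommMonoid M] {s : Finset P} (hs : ∀ (g : G), ∀ u ∈ s, g • u ∈ s) (f : P → M) (g : G) :
    ∑ u ∈ s, f (g • u) = ∑ u ∈ s, f u :=
  Finset.sum_nbij' (g • ·) (g⁻¹ • ·) (fun u hu => hs g u hu) (fun u hu => hs g⁻¹ u hu)
    (fun u _ => inv_smul_smul g u) (fun u _ => smul_inv_smul g u) (fun _ _ => rfl)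

theorem Finsupp.linearCombination_mem_span_sum_of_smul_invariant {G P k M : Type*} [Group G]
    [MulAction G P] [Semiring k] [AddCommMonoid M] [Module k M] (f : P → M) {c : P →₀ k}
    (hc : ∀ (g : G) u, c (g • u) = c u) :
    linearCombination k f c ∈
      Submodule.span k
        {m | ∃ s : Finset P, (∀ (g : G), ∀ u ∈ s, g • u ∈ s) ∧ ∑ u ∈ s, f u = m} := by
  classical
  rw [linearCombination_apply, Finsupp.sum, Finset.sum_partition (MulAction.orbitRel G P)]
  refine Submodule.sum_mem _ fun ω hω => ?_
  obtain ⟨v, -, rfl⟩ := Finset.mem_image.mp hω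
  set s := {u ∈ c.support | Quotient.mk (MulAction.orbitRel G P) u = ⟦v⟧}
  have hfiber : ∀ u ∈ s, ∃ g : G, g • v = u := fun u hu =>
    MulAction.orbitRel_apply.mp (Quotient.eq.mp (Finset.mem_filter.mp hu).2)
  have hstable : ∀ (g : G), ∀ u ∈ s, g • u ∈ s := by
    intro g u hu
    obtain ⟨hu, hu'⟩ := Finset.mem_filter.mp hu
    refine Finset.mem_filter.mpr ⟨by rw [mem_support_iff, hc]; exact mem_support_iff.mp hu, ?_⟩
    exact (Quotient.sound (MulAction.orbitRel_apply.mpr (MulAction.mem_orbit u g))).trans hu'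
  have hcoeff : ∀ u ∈ s, c u • f u = c v • f u := fun u hu => by
    obtain ⟨g, rfl⟩ := hfiber u hu
    rw [hc]
  rw [Finset.sum_congr rfl hcoeff, ← Finset.smul_sum]
  exact Submodule.smul_mem _ _ (Submodule.subset_span ⟨s, hstable, rfl⟩)

theorem exists_pow_pow_eq {M : Type*} [Monoid M] {p : ℕ} (h : ∀ a : M, ∃ b, b ^ p = a) (e : ℕ)
    (a : M) : ∃ b, b ^ p ^ e = a := by
  induction e generalizing a with
  | zero => exact ⟨a, by rw [pow_zero, pow_one]⟩
  | succ e ih =>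
    obtain ⟨b, rfl⟩ := h a
    obtain ⟨c, rfl⟩ := ih b
    exact ⟨c, by rw [pow_succ, pow_mul]⟩

theorem PiTensorProduct.tprod_pow {ι R : Type*} {A : ι → Type*} [CommSemiring R]
    [∀ i, Semiring (A i)] [∀ i, Algebra R (A i)] (x : ∀ i, A i) (m : ℕ) :
    tprod R x ^ m = tprod R (x ^ m) := by
  induction m with
  | zero => rw [pow_zero, pow_zero, PiTensorProduct.one_def]
  | succ m ih => rw [pow_succ, ih, tprod_mul_tprod, pow_succ]

section TensorPower

variable {k A : Type*} [CommRing k] [CommRing A] [Algebra k A] {n : ℕ}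
  {ρ : Equiv.Perm (Fin n) →* ((⨂[k] _ : Fin n, A) ≃ₐ[k] ⨂[k] _ : Fin n, A)}

theorem map_perm_of_map_tprod_eq_prod {ε : A →ₐ[k] k} {εB : (⨂[k] _ : Fin n, A) →ₐ[k] k}
    (hεB : ∀ v : Fin n → A, εB (tprod k v) = ∏ i, ε (v i))
    (hρ : ∀ (g : Equiv.Perm (Fin n)) (v : Fin n → A), ρ g (tprod k v) = tprod k fun i => v (g⁻¹ i))
    (g : Equiv.Perm (Fin n)) (y : ⨂[k] _ : Fin n, A) : εB (ρ g y) = εB y := by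
  induction y using PiTensorProduct.induction_on with
  | smul_tprod c v =>
    rw [map_smul, map_smul, map_smul, hρ, hεB, hεB, Equiv.prod_comp g⁻¹ fun i => ε (v i)]
  | add y z hy hz => rw [map_add, map_add, map_add, hy, hz]

attribute [local instance] arrowAction

theorem piTensorProduct_basis_perm
    (hρ : ∀ (g : Equiv.Perm (Fin n)) (v : Fin n → A), ρ g (tprod k v) = tprod k fun i => v (g⁻¹ i))
    {S : Type*} (b : Basis S k A) (g : Equiv.Perm (Fin n)) (u : Fin n → S) :
    ρ g (Basis.piTensorProduct (fun _ => b) u) = Basis.piTensorProduct (fun _ => b) (g • u) := by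
  rw [Basis.piTensorProduct_apply, Basis.piTensorProduct_apply, hρ]
  rfl

theorem piTensorProduct_basis_repr_perm
    (hρ : ∀ (g : Equiv.Perm (Fin n)) (v : Fin n → A), ρ g (tprod k v) = tprod k fun i => v (g⁻¹ i))
    {S : Type*} (b : Basis S k A) (g : Equiv.Perm (Fin n)) (y : ⨂[k] _ : Fin n, A) (u : Fin n → S) :
    (Basis.piTensorProduct (fun _ => b)).repr (ρ g y) (g • u) =
      (Basis.piTensorProduct (fun _ => b)).repr y u := by
  classical
  have : ((Basis.piTensorProduct (fun _ => b)).coord (g • u)).comp (ρ g).toLinearMap =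
      (Basis.piTensorProduct (fun _ => b)).coord u :=
    (Basis.piTensorProduct (fun _ => b)).ext fun w => by
      rw [LinearMap.comp_apply, AlgEquiv.toLinearMap_apply, piTensorProduct_basis_perm hρ,
        Basis.coord_apply, Basis.coord_apply, Basis.repr_self_apply, Basis.repr_self_apply]
      simp only [smul_left_cancel_iff]
  exact LinearMap.congr_fun this y

theorem sum_piTensorProduct_basis_mem_image_pow {p : ℕ} [ExpChar (⨂[k] _ : Fin n, A) p]
    (hρ : ∀ (g : Equiv.Perm (Fin n)) (v : Fin n → A), ρ g (tprod k v) = tprod k fun i => v (g⁻¹ i))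
    (hroots : ∀ a : A, ∃ b, b ^ p = a) (e : ℕ) {S : Type*} (b : Basis S k A)
    {G : Subgroup (Equiv.Perm (Fin n))} {s : Finset (Fin n → S)}
    (hs : ∀ (g : G), ∀ u ∈ s, g • u ∈ s) :
    ∑ u ∈ s, Basis.piTensorProduct (fun _ => b) u ∈ (· ^ p ^ e) '' (invariants ρ G : Set _) := by
  choose r hr using exists_pow_pow_eq hroots e
  refine ⟨∑ u ∈ s, tprod k fun i => r (b (u i)), fun g hg => ?_, ?_⟩
  · rw [map_sum]
    simp_rw [hρ]
    exact Finset.sum_comp_smul_of_forall_smul_mem hs (fun u => tprod k fun i => r (b (u i)))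
      ⟨g, hg⟩
  · simp only [sum_pow_char_pow, tprod_pow, Basis.piTensorProduct_apply, Pi.pow_def, hr]

theorem mem_span_pow_of_mem_invariants [Module.Free k A] {p : ℕ} [ExpChar (⨂[k] _ : Fin n, A) p]
    (hρ : ∀ (g : Equiv.Perm (Fin n)) (v : Fin n → A), ρ g (tprod k v) = tprod k fun i => v (g⁻¹ i))
    (hroots : ∀ a : A, ∃ b, b ^ p = a) (e : ℕ) {G : Subgroup (Equiv.Perm (Fin n))}
    {x : ⨂[k] _ : Fin n, A} (hx : x ∈ invariants ρ G) :
    x ∈ Submodule.span k ((· ^ p ^ e) '' (invariants ρ G : Set _)) := by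
  set 𝔟 := Basis.piTensorProduct fun _ : Fin n => Module.Free.chooseBasis k A
  have hc : ∀ (g : G) u, 𝔟.repr x (g • u) = 𝔟.repr x u := fun g u => by
    conv_lhs => rw [← hx g g.2]
    exact piTensorProduct_basis_repr_perm hρ _ g x u
  rw [← 𝔟.linearCombination_repr x]
  refine Submodule.span_le.mpr ?_ (Finsupp.linearCombination_mem_span_sum_of_smul_invariant 𝔟 hc)
  rintro _ ⟨s, hs, rfl⟩
  exact Submodule.subset_span (sum_piTensorProduct_basis_mem_image_pow hρ hroots e _ hs)

end TensorPower

section Norm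

open Polynomial

variable {k B : Type*} [CommRing k] [CommRing B] [Algebra k B] {n : ℕ}
  (ρ : Equiv.Perm (Fin n) →* (B ≃ₐ[k] B))

section ProdXSub

variable (H : Subgroup (Equiv.Perm (Fin n))) [Fintype H]

noncomputable def prodXSubAlgEquiv (y : B) : B[X] := ∏ g : H, (X - C (ρ g y))

theorem prodXSubAlgEquiv_monic (y : B) : (prodXSubAlgEquiv ρ H y).Monic :=
  monic_prod_of_monic _ _ fun _ _ => monic_X_sub_C _

theorem natDegree_prodXSubAlgEquiv [Nontrivial B] (y : B) :
    (prodXSubAlgEquiv ρ H y).natDegree = Fintype.card H := by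
  rw [prodXSubAlgEquiv, natDegree_prod_of_monic _ _ fun _ _ => monic_X_sub_C _]
  simp

theorem eval_prodXSubAlgEquiv_self (y : B) : (prodXSubAlgEquiv ρ H y).eval y = 0 := by
  rw [prodXSubAlgEquiv, eval_prod]
  exact Finset.prod_eq_zero (Finset.mem_univ 1) (by simp)

theorem coeff_prodXSubAlgEquiv_mem_invariants (y : B) (i : ℕ) :
    (prodXSubAlgEquiv ρ H y).coeff i ∈ invariants ρ H := fun g hg => by
  have : (prodXSubAlgEquiv ρ H y).map (ρ g : B →+* B) = prodXSubAlgEquiv ρ H y := by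
    rw [prodXSubAlgEquiv, Polynomial.map_prod]
    exact Fintype.prod_equiv (Equiv.mulLeft ⟨g, hg⟩) _ _ fun g' => by simp [map_mul]
  conv_rhs => rw [← this, coeff_map]
  rfl

theorem map_prodXSubAlgEquiv {R : Type*} [CommRing R] (ε : B →+* R) {y : B}
    (hy : ∀ g ∈ H, ε (ρ g y) = 0) :
    (prodXSubAlgEquiv ρ H y).map ε = X ^ Fintype.card H := by
  simp [prodXSubAlgEquiv, Polynomial.map_prod, hy]

end ProdXSub

theorem pow_card_mem_map_ker [Nontrivial B] {G G' : Subgroup (Equiv.Perm (Fin n))}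
    (hGG' : G ≤ G') {R : Type*} [CommRing R] (ε : B →+* R) (w : invariants ρ G)
    (hw : ∀ g ∈ G', ε (ρ g w) = 0) :
    w ^ Nat.card G' ∈ Ideal.map (Subring.inclusion (invariants_antitone ρ hGG'))
      (RingHom.ker (ε.comp (invariants ρ G').subtype)) := by
  have := Fintype.ofFinite G'
  set P := prodXSubAlgEquiv ρ G' (w : B)
  let d : ℕ → invariants ρ G' := fun i =>
    ⟨P.coeff i, coeff_prodXSubAlgEquiv_mem_invariants ρ G' w i⟩
  have hd : ∀ i < Fintype.card G', d i ∈ RingHom.ker (ε.comp (invariants ρ G').subtype) :=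
    fun i hi => by
      rw [RingHom.mem_ker, RingHom.comp_apply, Subring.subtype_apply, ← coeff_map,
        map_prodXSubAlgEquiv ρ G' ε hw, coeff_X_pow, if_neg hi.ne]
  have hrel : w ^ Fintype.card G' + ∑ i ∈ Finset.range (Fintype.card G'),
      Subring.inclusion (invariants_antitone ρ hGG') (d i) * w ^ i = 0 := by
    apply Subtype.ext
    have := congrArg (eval (w : B)) (prodXSubAlgEquiv_monic ρ G' w).as_sum
    rw [eval_prodXSubAlgEquiv_self, natDegree_prodXSubAlgEquiv] at this
    simpa [eval_finsetSum, d] using this.symm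
  rw [Nat.card_eq_fintype_card, eq_neg_of_add_eq_zero_left hrel]
  exact neg_mem (Ideal.sum_mem _ fun i hi =>
    Ideal.mul_mem_right _ _ (Ideal.mem_map_of_mem _ (hd i (Finset.mem_range.mp hi))))

theorem exists_mem_map_ker_coe_eq_sub_algebraMap [Nontrivial B] {p e : ℕ} [ExpChar B p]
    {G G' : Subgroup (Equiv.Perm (Fin n))} (hGG' : G ≤ G') (hcard : Nat.card G' = p ^ e)
    (ε : B →ₐ[k] k) (hε : ∀ g ∈ G', ∀ b, ε (ρ g b) = ε b) {y : B}
    (hy : y ∈ Submodule.span k ((· ^ p ^ e) '' (invariants ρ G : Set B))) :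
    ∃ w ∈ Ideal.map (Subring.inclusion (invariants_antitone ρ hGG'))
      (RingHom.ker (ε.toRingHom.comp (invariants ρ G').subtype)),
      (w : B) = y - algebraMap k B (ε y) := by
  have halg : ∀ c : k, algebraMap k B c ∈ invariants ρ G := fun c g _ => (ρ g).commutes c
  induction hy using Submodule.span_induction with
  | mem _ h =>
    obtain ⟨z, hz, rfl⟩ := h
    let z₀ : invariants ρ G := ⟨z, hz⟩ - ⟨_, halg (ε z)⟩
    have hz₀ : ∀ g ∈ G', ε.toRingHom (ρ g z₀) = 0 := fun g hg => by
      simp [z₀, hε g hg]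
    have := pow_card_mem_map_ker ρ hGG' ε.toRingHom z₀ hz₀
    rw [hcard] at this
    refine ⟨z₀ ^ p ^ e, this, ?_⟩
    simp [z₀, sub_pow_expChar_pow]
  | zero => exact ⟨0, zero_mem _, by simp⟩
  | add y₁ y₂ _ _ h₁ h₂ =>
    obtain ⟨w₁, hw₁, hwy₁⟩ := h₁
    obtain ⟨w₂, hw₂, hwy₂⟩ := h₂
    exact ⟨w₁ + w₂, add_mem hw₁ hw₂, by simp [hwy₁, hwy₂]; ring⟩
  | smul c y _ h =>
    obtain ⟨w, hw, hwy⟩ := h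
    exact ⟨⟨_, halg c⟩ * w, Ideal.mul_mem_left _ _ hw, by simp [hwy, Algebra.smul_def]; ring⟩

end Norm

theorem stmt14_general (l n : ℕ) (hl : l.Prime) (k : Type*) [Field k] [CharP k l]
    (A : Type*) [CommRing A] [Algebra k A] (ε : A →ₐ[k] k)
    (hroots : ∀ a : A, ∃ b : A, b ^ l = a)
    (G G' : Subgroup (Equiv.Perm (Fin n))) (hGG' : G ≤ G')
    (hG' : IsPGroup l G')
    (ρ : Equiv.Perm (Fin n) →* ((⨂[k] _ : Fin n, A) ≃ₐ[k] ⨂[k] _ : Fin n, A))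
    (hρ : ∀ (g : Equiv.Perm (Fin n)) (v : Fin n → A),
      ρ g (PiTensorProduct.tprod k v) = PiTensorProduct.tprod k fun i => v (g⁻¹ i))
    (εB : (⨂[k] _ : Fin n, A) →ₐ[k] k)
    (hεB : ∀ v : Fin n → A, εB (PiTensorProduct.tprod k v) = ∏ i, ε (v i)) :
    RingHom.ker (εB.toRingHom.comp (invariants ρ G).subtype) =
      Ideal.map (Subring.inclusion (invariants_antitone ρ hGG'))
        (RingHom.ker (εB.toRingHom.comp (invariants ρ G').subtype)) := by
  have : Fact l.Prime := ⟨hl⟩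
  have : Nontrivial (⨂[k] _ : Fin n, A) := εB.toRingHom.domain_nontrivial
  have : ExpChar (⨂[k] _ : Fin n, A) l :=
    expChar_of_injective_algebraMap (algebraMap k _).injective l
  obtain ⟨e, he⟩ := IsPGroup.iff_card.mp hG'
  refine le_antisymm (fun x hx => ?_) (Ideal.map_le_iff_le_comap.mpr fun w hw => hw)
  obtain ⟨w, hw, hwx⟩ := exists_mem_map_ker_coe_eq_sub_algebraMap ρ hGG' he εB
    (fun g _ => map_perm_of_map_tprod_eq_prod hεB hρ g)
    (mem_span_pow_of_mem_invariants hρ hroots e x.2)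
  have hx : εB x = 0 := hx
  rwa [← show w = x from Subtype.ext (by rw [hwx, hx, map_zero, sub_zero])]

/-- Let `k` be a field of characteristic `l`, `A` an augmented `k`-algebra in which every element
has an `l`-th root, and `G ⊆ G' ⊆ Σ_n` subgroups of `l`-power order acting on `B = A^{⊗n}` by
permuting the tensor factors, with the tensor product augmentation `ε_B`.  Then the augmentation
ideals of the invariant subrings satisfy `I_{B^G} = I_{B^{G'}} · B^G`. -/
theorem stmt14 (l n : ℕ) (hl : l.Prime) (k : Type*) [Field k] [CharP k l]
    (A : Type*) [CommRing A] [Algebra k A] (ε : A →ₐ[k] k)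
    (hroots : ∀ a : A, ∃ b : A, b ^ l = a)
    (G G' : Subgroup (Equiv.Perm (Fin n))) (hGG' : G ≤ G')
    (hG : IsPGroup l G) (hG' : IsPGroup l G')
    (ρ : Equiv.Perm (Fin n) →* ((⨂[k] _ : Fin n, A) ≃ₐ[k] ⨂[k] _ : Fin n, A))
    (hρ : ∀ (g : Equiv.Perm (Fin n)) (v : Fin n → A),
      ρ g (PiTensorProduct.tprod k v) = PiTensorProduct.tprod k fun i => v (g⁻¹ i))
    (εB : (⨂[k] _ : Fin n, A) →ₐ[k] k)
    (hεB : ∀ v : Fin n → A, εB (PiTensorProduct.tprod k v) = ∏ i, ε (v i)) :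
    RingHom.ker (εB.toRingHom.comp (invariants ρ G).subtype) =
      Ideal.map (Subring.inclusion (invariants_antitone ρ hGG'))
        (RingHom.ker (εB.toRingHom.comp (invariants ρ G').subtype)) :=
  stmt14_general l n hl k A ε hroots G G' hGG' hG' ρ hρ εB hεB
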